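/- If c : [0,1]² → ℝ is a copula density (nonnegative, with both marginals equal to 1 a.e.) bounded below by a constant ε > 0 a.e., then for all mean-zero f, g with ‖f‖₂ = ‖g‖₂ = 1, the correlation ∫∫ f(x)g(y)c(x,y) dx dy satisfies |∫∫ f g c| ≤ 1 − ε. -/

import Mathlib

/-!
Split the density as `c = ε + (c - ε)`. The constant part contributes `ε (∫ f) (∫ g) = 0`, while
`w = c - ε` is a nonnegative kernel both of whose marginals equal `1 - ε`. Integrating the AM-GM
bound `|f x * g y| ≤ (f x ^ 2 + g y ^ 2) / 2` against `w` gives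
`|∫∫ f g w| ≤ (1 - ε) (‖f‖₂² + ‖g‖₂²) / 2 = 1 - ε`.
-/

open MeasureTheory

theorem abs_mul_mul_le_of_nonneg {s t u : ℝ} (hu : 0 ≤ u) :
    |s * t * u| ≤ (s ^ 2 * u + t ^ 2 * u) / 2 := by
  rw [abs_mul, abs_of_nonneg hu, abs_mul]
  nlinarith [sq_nonneg (|s| - |t|), sq_abs s, sq_abs t]

section Marginals

variable {α β : Type*} [MeasurableSpace α] [MeasurableSpace β] {μ : Measure α} {ν : Measure β}
  [SFinite μ] [SFinite ν] {w : α × β → ℝ} {a : ℝ}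

theorem integrable_fst_mul_of_marginal (hw : Integrable w (μ.prod ν)) (hw0 : 0 ≤ᵐ[μ.prod ν] w)
    (hm : ∀ᵐ x ∂μ, ∫ y, w (x, y) ∂ν = a) {φ : α → ℝ} (hφ : Integrable φ μ) :
    Integrable (fun p => φ p.1 * w p) (μ.prod ν) := by
  have hmeas : AEStronglyMeasurable (fun p => φ p.1 * w p) (μ.prod ν) :=
    (hφ.1.comp_quasiMeasurePreserving Measure.quasiMeasurePreserving_fst).mul hw.1
  refine (integrable_prod_iff hmeas).2 ⟨?_, (hφ.norm.mul_const a).congr ?_⟩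
  · filter_upwards [hw.prod_right_ae] with x hx using hx.const_mul _
  · filter_upwards [Measure.ae_ae_of_ae_prod hw0, hm] with x hx0 hmx
    rw [← hmx, ← integral_const_mul]
    refine integral_congr_ae ?_
    filter_upwards [hx0] with y hy
    rw [norm_mul, Real.norm_of_nonneg hy]

theorem integral_fst_mul_of_marginal (hw : Integrable w (μ.prod ν))
    (hw0 : 0 ≤ᵐ[μ.prod ν] w) (hm : ∀ᵐ x ∂μ, ∫ y, w (x, y) ∂ν = a) {φ : α → ℝ}
    (hφ : Integrable φ μ) :
    ∫ p, φ p.1 * w p ∂(μ.prod ν) = a * ∫ x, φ x ∂μ := by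
  rw [integral_prod _ (integrable_fst_mul_of_marginal hw hw0 hm hφ), ← integral_const_mul]
  refine integral_congr_ae ?_
  filter_upwards [hm] with x hmx
  rw [integral_const_mul, hmx, mul_comm]

theorem integrable_snd_mul_of_marginal (hw : Integrable w (μ.prod ν)) (hw0 : 0 ≤ᵐ[μ.prod ν] w)
    (hm : ∀ᵐ y ∂ν, ∫ x, w (x, y) ∂μ = a) {ψ : β → ℝ} (hψ : Integrable ψ ν) :
    Integrable (fun p => ψ p.2 * w p) (μ.prod ν) :=
  (integrable_fst_mul_of_marginal hw.swap
    (Measure.measurePreserving_swap.quasiMeasurePreserving.ae hw0) hm hψ).swap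

theorem integral_snd_mul_of_marginal (hw : Integrable w (μ.prod ν))
    (hw0 : 0 ≤ᵐ[μ.prod ν] w) (hm : ∀ᵐ y ∂ν, ∫ x, w (x, y) ∂μ = a) {ψ : β → ℝ}
    (hψ : Integrable ψ ν) :
    ∫ p, ψ p.2 * w p ∂(μ.prod ν) = a * ∫ y, ψ y ∂ν := by
  rw [← integral_fst_mul_of_marginal hw.swap
    (Measure.measurePreserving_swap.quasiMeasurePreserving.ae hw0) hm hψ]
  exact (integral_prod_swap _).symm

variable {b : ℝ} {f : α → ℝ} {g : β → ℝ}

theorem integrable_mul_mul_of_marginal (hw : Integrable w (μ.prod ν)) (hw0 : 0 ≤ᵐ[μ.prod ν] w)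
    (hm₁ : ∀ᵐ x ∂μ, ∫ y, w (x, y) ∂ν = a) (hm₂ : ∀ᵐ y ∂ν, ∫ x, w (x, y) ∂μ = b)
    (hf : MemLp f 2 μ) (hg : MemLp g 2 ν) :
    Integrable (fun p => f p.1 * g p.2 * w p) (μ.prod ν) := by
  refine Integrable.mono' (((integrable_fst_mul_of_marginal hw hw0 hm₁ hf.integrable_sq).add
    (integrable_snd_mul_of_marginal hw hw0 hm₂ hg.integrable_sq)).div_const 2) ?_
    (by filter_upwards [hw0] with p hp using abs_mul_mul_le_of_nonneg hp)
  exact ((hf.1.comp_quasiMeasurePreserving Measure.quasiMeasurePreserving_fst).mul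
    (hg.1.comp_quasiMeasurePreserving Measure.quasiMeasurePreserving_snd)).mul hw.1

theorem abs_integral_mul_mul_le_of_marginal (hw : Integrable w (μ.prod ν))
    (hw0 : 0 ≤ᵐ[μ.prod ν] w) (hm₁ : ∀ᵐ x ∂μ, ∫ y, w (x, y) ∂ν = a)
    (hm₂ : ∀ᵐ y ∂ν, ∫ x, w (x, y) ∂μ = b) (hf : MemLp f 2 μ) (hg : MemLp g 2 ν) :
    |∫ p, f p.1 * g p.2 * w p ∂(μ.prod ν)| ≤
      (a * ∫ x, f x ^ 2 ∂μ + b * ∫ y, g y ^ 2 ∂ν) / 2 := by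
  have hF := integrable_fst_mul_of_marginal hw hw0 hm₁ hf.integrable_sq
  have hG := integrable_snd_mul_of_marginal hw hw0 hm₂ hg.integrable_sq
  calc |∫ p, f p.1 * g p.2 * w p ∂(μ.prod ν)|
      ≤ ∫ p, (f p.1 ^ 2 * w p + g p.2 ^ 2 * w p) / 2 ∂(μ.prod ν) :=
        norm_integral_le_of_norm_le (f := fun p => f p.1 * g p.2 * w p) ((hF.add hG).div_const 2)
          (by filter_upwards [hw0] with p hp using abs_mul_mul_le_of_nonneg hp)
    _ = (a * ∫ x, f x ^ 2 ∂μ + b * ∫ y, g y ^ 2 ∂ν) / 2 := by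
        rw [integral_div, integral_add hF hG,
          integral_fst_mul_of_marginal hw hw0 hm₁ hf.integrable_sq,
          integral_snd_mul_of_marginal hw hw0 hm₂ hg.integrable_sq]

end Marginals

theorem abs_integral_mul_mul_le_of_le_density {α β : Type*} [MeasurableSpace α]
    [MeasurableSpace β] {μ : Measure α} {ν : Measure β} [IsProbabilityMeasure μ]
    [IsProbabilityMeasure ν] {κ : α × β → ℝ} {ε : ℝ} (hκ : Integrable κ (μ.prod ν))
    (hm₁ : ∀ᵐ x ∂μ, ∫ y, κ (x, y) ∂ν = 1) (hm₂ : ∀ᵐ y ∂ν, ∫ x, κ (x, y) ∂μ = 1)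
    (hε : ∀ᵐ p ∂(μ.prod ν), ε ≤ κ p) {f : α → ℝ} {g : β → ℝ} (hf : MemLp f 2 μ)
    (hg : MemLp g 2 ν) (hf0 : ∫ x, f x ∂μ = 0) :
    |∫ p, f p.1 * g p.2 * κ p ∂(μ.prod ν)| ≤
      (1 - ε) * ((∫ x, f x ^ 2 ∂μ + ∫ y, g y ^ 2 ∂ν) / 2) := by
  have hw : Integrable (fun p => κ p - ε) (μ.prod ν) := hκ.sub (integrable_const ε)
  have hw0 : 0 ≤ᵐ[μ.prod ν] fun p => κ p - ε := by
    filter_upwards [hε] with p hp using sub_nonneg.2 hp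
  have hw₁ : ∀ᵐ x ∂μ, ∫ y, (κ (x, y) - ε) ∂ν = 1 - ε := by
    filter_upwards [hκ.prod_right_ae, hm₁] with x hx hmx
    simp [integral_sub hx (integrable_const ε), hmx]
  have hw₂ : ∀ᵐ y ∂ν, ∫ x, (κ (x, y) - ε) ∂μ = 1 - ε := by
    filter_upwards [hκ.prod_left_ae, hm₂] with y hy hmy
    simp [integral_sub hy (integrable_const ε), hmy]
  have hfg : Integrable (fun p => f p.1 * g p.2) (μ.prod ν) :=
    (hf.integrable one_le_two).mul_prod (hg.integrable one_le_two)
  calc |∫ p, f p.1 * g p.2 * κ p ∂(μ.prod ν)|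
      = |∫ p, (f p.1 * g p.2 * (κ p - ε) + ε * (f p.1 * g p.2)) ∂(μ.prod ν)| := by
        congr 2 with p
        ring
    _ = |∫ p, f p.1 * g p.2 * (κ p - ε) ∂(μ.prod ν)| := by
        rw [integral_add (integrable_mul_mul_of_marginal hw hw0 hw₁ hw₂ hf hg) (hfg.const_mul ε),
          integral_const_mul, integral_prod_mul f g, hf0, zero_mul, mul_zero, add_zero]
    _ ≤ (1 - ε) * ((∫ x, f x ^ 2 ∂μ + ∫ y, g y ^ 2 ∂ν) / 2) := by
        convert abs_integral_mul_mul_le_of_marginal hw hw0 hw₁ hw₂ hf hg using 1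
        ring

instance isProbabilityMeasure_volume_restrict_unitInterval :
    IsProbabilityMeasure (volume.restrict (Set.Icc (0 : ℝ) 1)) :=
  ⟨by simp⟩

theorem bounded_below_density_correlation_bound_general
    (c : ℝ → ℝ → ℝ) (ε : ℝ)
    (hc_int : IntegrableOn (fun p : ℝ × ℝ => c p.1 p.2)
      (Set.Icc (0:ℝ) 1 ×ˢ Set.Icc (0:ℝ) 1))
    (hmarg1 : ∀ᵐ x ∂(volume.restrict (Set.Icc (0:ℝ) 1)),
      ∫ y in Set.Icc (0:ℝ) 1, c x y = 1)
    (hmarg2 : ∀ᵐ y ∂(volume.restrict (Set.Icc (0:ℝ) 1)),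
      ∫ x in Set.Icc (0:ℝ) 1, c x y = 1)
    (hdom : ∀ᵐ p ∂(volume.restrict (Set.Icc (0:ℝ) 1 ×ˢ Set.Icc (0:ℝ) 1)),
      ε ≤ c p.1 p.2) :
    ∀ f g : ℝ → ℝ,
      MemLp f 2 (volume.restrict (Set.Icc (0:ℝ) 1)) →
      MemLp g 2 (volume.restrict (Set.Icc (0:ℝ) 1)) →
      (∫ x in Set.Icc (0:ℝ) 1, (f x) ^ 2) = 1 →
      (∫ x in Set.Icc (0:ℝ) 1, (g x) ^ 2) = 1 →
      (∫ x in Set.Icc (0:ℝ) 1, f x) = 0 →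
      (∫ x in Set.Icc (0:ℝ) 1, g x) = 0 →
      |∫ p in Set.Icc (0:ℝ) 1 ×ˢ Set.Icc (0:ℝ) 1, f p.1 * g p.2 * c p.1 p.2| ≤ 1 - ε := by
  intro f g hf hg hf2 hg2 hf0 _
  have hprod : volume.restrict (Set.Icc (0:ℝ) 1 ×ˢ Set.Icc (0:ℝ) 1) =
      (volume.restrict (Set.Icc (0:ℝ) 1)).prod (volume.restrict (Set.Icc (0:ℝ) 1)) := by
    rw [Measure.prod_restrict, ← Measure.volume_eq_prod]
  rw [IntegrableOn, hprod] at hc_int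
  rw [hprod] at hdom ⊢
  simpa [hf2, hg2] using
    abs_integral_mul_mul_le_of_le_density hc_int hmarg1 hmarg2 hdom hf hg hf0

theorem bounded_below_density_correlation_bound
    (c : ℝ → ℝ → ℝ) (ε : ℝ) (hε : 0 < ε)
    (hc_nonneg : ∀ᵐ p ∂(volume.restrict (Set.Icc (0:ℝ) 1 ×ˢ Set.Icc (0:ℝ) 1)),
      0 ≤ c p.1 p.2)
    (hc_int : IntegrableOn (fun p : ℝ × ℝ => c p.1 p.2)
      (Set.Icc (0:ℝ) 1 ×ˢ Set.Icc (0:ℝ) 1))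
    (hmarg1 : ∀ᵐ x ∂(volume.restrict (Set.Icc (0:ℝ) 1)),
      ∫ y in Set.Icc (0:ℝ) 1, c x y = 1)
    (hmarg2 : ∀ᵐ y ∂(volume.restrict (Set.Icc (0:ℝ) 1)),
      ∫ x in Set.Icc (0:ℝ) 1, c x y = 1)
    (hdom : ∀ᵐ p ∂(volume.restrict (Set.Icc (0:ℝ) 1 ×ˢ Set.Icc (0:ℝ) 1)),
      ε ≤ c p.1 p.2) :
    ∀ f g : ℝ → ℝ,
      MemLp f 2 (volume.restrict (Set.Icc (0:ℝ) 1)) →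
      MemLp g 2 (volume.restrict (Set.Icc (0:ℝ) 1)) →
      (∫ x in Set.Icc (0:ℝ) 1, (f x) ^ 2) = 1 →
      (∫ x in Set.Icc (0:ℝ) 1, (g x) ^ 2) = 1 →
      (∫ x in Set.Icc (0:ℝ) 1, f x) = 0 →
      (∫ x in Set.Icc (0:ℝ) 1, g x) = 0 →
      |∫ p in Set.Icc (0:ℝ) 1 ×ˢ Set.Icc (0:ℝ) 1, f p.1 * g p.2 * c p.1 p.2| ≤ 1 - ε :=
  bounded_below_density_correlation_bound_general c ε hc_int hmarg1 hmarg2 hdom
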